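/- Let (C, J, P) be a geometric context. A morphism φ : U' → U in C is a monomorphism belonging to P if, and only if, the induced morphism of representable sheaves h_φ : h_{U'} → h_U is an open immersion of sheaves. -/

import Mathlib

open CategoryTheory CategoryTheory.Limits

universe u

set_option synthInstance.maxHeartbeats 400000

namespace GeomCtx

variable {C : Type u} [SmallCategory C]

/-- An arrow `f` of a category is *cartesian* if pullbacks of arbitrary morphisms
along `f` exist. -/
def CartesianArrow {X Y : C} (f : X ⟶ Y) : Prop :=
  ∀ ⦃Z : C⦄ (g : Z ⟶ Y), HasPullback f g

/-- A family of arrows `(ρ i : Ui i ⟶ X)` is a `J`-covering if the sieve it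
generates is a `J`-covering sieve. -/
def IsJCover (J : GrothendieckTopology C) {X : C} {I : Type u} (Ui : I → C)
    (ρ : ∀ i, Ui i ⟶ X) : Prop :=
  Sieve.generate (Presieve.ofArrows Ui ρ) ∈ J X

/-- A Grothendieck pretopology (in the sense that does not presuppose the existence of
all pullbacks in `C`): a collection of covering families consisting of cartesian arrows,
stable under pullback, transitive, and containing the isomorphisms. -/
structure IsPretopology (Cov : ∀ U : C, Set (Presieve U)) : Prop where
  cartesian : ∀ ⦃U : C⦄, ∀ R ∈ Cov U, ∀ ⦃V : C⦄ (f : V ⟶ U), R f → CartesianArrow f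
  pullback_stable : ∀ ⦃U V : C⦄ (g : V ⟶ U), ∀ R ∈ Cov U,
    ∃ S ∈ Cov V, ∀ ⦃W : C⦄ (f : W ⟶ V), S f →
      ∃ (Z : C) (r : Z ⟶ U) (h : W ⟶ Z), R r ∧ IsPullback h f r g
  trans : ∀ ⦃U : C⦄ (R : Presieve U), R ∈ Cov U →
    ∀ (T : ∀ ⦃V : C⦄ ⦃f : V ⟶ U⦄, R f → Presieve V),
      (∀ ⦃V : C⦄ ⦃f : V ⟶ U⦄ (hf : R f), T hf ∈ Cov V) →
      R.bind T ∈ Cov U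
  has_isos : ∀ ⦃U V : C⦄ (f : V ⟶ U) [IsIso f], Presieve.singleton f ∈ Cov U

/-- A Grothendieck topology is generated by a pretopology if its covering sieves are
exactly the sieves containing a sieve generated by a covering family of the pretopology. -/
def GeneratedByPretopology (J : GrothendieckTopology C) : Prop :=
  ∃ Cov : ∀ U : C, Set (Presieve U), IsPretopology Cov ∧
    ∀ (U : C) (S : Sieve U), S ∈ J U ↔ ∃ R ∈ Cov U, Sieve.generate R ≤ S

/-- A *geometric context* `(C, J, P)`: a small category `C` with finite products, a
subcanonical Grothendieck topology `J` generated by a pretopology, and an admissible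
class `P` of arrows of `C` which is `J`-local and locally cartesian, and such that `J`
is `P`-generated. -/
structure IsGeometricContext (J : GrothendieckTopology C) (P : MorphismProperty C) : Prop where
  /-- (GC1) `C` admits finite products. -/
  hasFiniteProducts : HasFiniteProducts C
  /-- (GC2a) `J` is subcanonical: every representable presheaf is a `J`-sheaf. -/
  subcanonical : ∀ U : C, Presheaf.IsSheaf J (yoneda.obj U)
  /-- (GC2b) `J` is generated by a Grothendieck pretopology. -/
  pretopologyGenerated : GeneratedByPretopology J
  /-- (GC3a) `P` contains all identities. -/
  id_mem : ∀ U : C, P (𝟙 U)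
  /-- (GC3b) `P` is stable under base change. -/
  stableUnderBaseChange : ∀ ⦃U' V' U V : C⦄ (f' : U' ⟶ V') (g' : U' ⟶ U)
    (g : V' ⟶ V) (f : U ⟶ V), IsPullback f' g' g f → P f → P f'
  /-- (GC3c) `P` is stable under composition. -/
  stableUnderComposition : ∀ ⦃U V W : C⦄ (f : U ⟶ V) (g : V ⟶ W), P f → P g → P (f ≫ g)
  /-- (GC4) `P` is `J`-local. -/
  jLocal : ∀ ⦃U V : C⦄ (φ : U ⟶ V) ⦃I : Type u⦄ (Ui : I → C) (ρ : ∀ i, Ui i ⟶ U),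
    IsJCover J Ui ρ → (∀ i, P (ρ i)) → (∀ i, P (ρ i ≫ φ)) → P φ
  /-- (GC5) `J` is `P`-generated: every `J`-covering admits a `P`-refinement. -/
  pGenerated : ∀ ⦃U : C⦄ ⦃A : Type u⦄ (Ua : A → C) (ρ : ∀ a, Ua a ⟶ U),
    IsJCover J Ua ρ → ∃ (I : Type u) (Vi : I → C) (φ : ∀ i, Vi i ⟶ U),
      (∀ i, P (φ i)) ∧ ∀ a, ∃ (i : I) (g : Ua a ⟶ Vi i), g ≫ φ i = ρ a
  /-- (GC6) `P` is locally cartesian. -/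
  locallyCartesian : ∀ ⦃U V : C⦄ (φ : U ⟶ V), P φ →
    ∃ (I : Type u) (Ui : I → C) (ρ : ∀ i, Ui i ⟶ U),
      IsJCover J Ui ρ ∧ (∀ i, P (ρ i)) ∧ ∀ i, CartesianArrow (ρ i ≫ φ)

variable (J : GrothendieckTopology C)

/-- `Subcanonicity` of `J`, phrased concretely. -/
abbrev Subcanonical : Prop := ∀ U : C, Presheaf.IsSheaf J (yoneda.obj U)

/-- The sheaf represented by an object `U` of `C` (for a subcanonical topology). -/
def yo (hs : Subcanonical J) (U : C) : Sheaf J (Type u) :=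
  ⟨yoneda.obj U, hs U⟩

/-- The morphism of representable sheaves induced by a morphism of `C`. -/
def yoMap (hs : Subcanonical J) {U V : C} (f : U ⟶ V) : yo J hs U ⟶ yo J hs V :=
  ⟨yoneda.map f⟩

/-- Two morphisms `f : A ⟶ X` and `g : B ⟶ X` of sheaves have the same image, as a
subobject of `X`: there is a common monomorphism into `X` through which both factor
epimorphically. -/
def SameImage {A B X : Sheaf J (Type u)} (f : A ⟶ X) (g : B ⟶ X) : Prop :=
  ∃ (W : Sheaf J (Type u)) (i : W ⟶ X) (p : A ⟶ W) (q : B ⟶ W),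
    Mono i ∧ Epi p ∧ Epi q ∧ p ≫ i = f ∧ q ≫ i = g

instance hasSheafifyTypeGeom : HasSheafify J (Type u) := inferInstance

instance hasColimitsSheafGeom : HasColimitsOfSize.{u, u} (Sheaf J (Type u)) :=
  Sheaf.instHasColimitsOfSize

variable (P : MorphismProperty C)

/-- A morphism of sheaves `f : F ⟶ H` is an *open immersion* if for every `U : C` and
every morphism `g : h_U ⟶ H`, the projection `F ×_H h_U ⟶ h_U` is a monomorphism and
there is a family of `P`-morphisms `(Ui i ⟶ U)` such that the image of the induced
morphism `∐ h_{Ui i} ⟶ h_U` coincides, as a subobject of `h_U`, with the image of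
`F ×_H h_U ⟶ h_U`. -/
def IsOpenImmersion (hs : Subcanonical J) {F H : Sheaf J (Type u)} (f : F ⟶ H) : Prop :=
  ∀ (U : C) (g : yo J hs U ⟶ H),
    Mono (pullback.snd f g) ∧
    ∃ (I : Type u) (Ui : I → C) (ρ : ∀ i, Ui i ⟶ U),
      (∀ i, P (ρ i)) ∧
      SameImage J (Limits.Sigma.desc fun i => yoMap J hs (ρ i)) (pullback.snd f g)

/-- An *open atlas* of a sheaf `X`: a family of open immersions from representable
sheaves which is jointly epimorphic. A sheaf admitting an open atlas is an
*elementary scheme*. -/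
def IsElementaryScheme (hs : Subcanonical J) (X : Sheaf J (Type u)) : Prop :=
  ∃ (I : Type u) (Ui : I → C) (p : ∀ i, yo J hs (Ui i) ⟶ X),
    (∀ i, IsOpenImmersion J P hs (p i)) ∧ Epi (Limits.Sigma.desc p)

/-- A morphism of sheaves `f : F ⟶ H` is an *`S`-morphism* if for every `U : C` and
every `g : h_U ⟶ H` there is an open atlas `∐ h_{Ui i} ⟶ F ×_H h_U` such that each
induced composite `Ui i ⟶ U` (viewed in `C` via the Yoneda embedding) lies in `S`. -/
def IsSMorphism (hs : Subcanonical J) (S : MorphismProperty C)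
    {F H : Sheaf J (Type u)} (f : F ⟶ H) : Prop :=
  ∀ (U : C) (g : yo J hs U ⟶ H),
    ∃ (I : Type u) (Ui : I → C) (p : ∀ i, yo J hs (Ui i) ⟶ pullback f g),
      (∀ i, IsOpenImmersion J P hs (p i)) ∧ Epi (Limits.Sigma.desc p) ∧
      ∀ i, ∃ ρ : Ui i ⟶ U, yoMap J hs ρ = p i ≫ pullback.snd f g ∧ S ρ

/-- A morphism of sheaves `f : F ⟶ H` is *schematic* if for every `U : C` and every
`g : h_U ⟶ H` the pullback `F ×_H h_U` is an elementary scheme. -/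
def IsSchematic (hs : Subcanonical J) {F H : Sheaf J (Type u)} (f : F ⟶ H) : Prop :=
  ∀ (U : C) (g : yo J hs U ⟶ H), IsElementaryScheme J P hs (pullback f g)

end GeomCtx

/-! ### Auxiliary lemmas -/

namespace GeomCtx

open Opposite CategoryTheory.GrothendieckTopology

variable {C : Type u} [SmallCategory C] {J : GrothendieckTopology C}

@[simp]
lemma yoMap_val (hs : Subcanonical J) {U V : C} (f : U ⟶ V) :
    (yoMap J hs f).hom = yoneda.map f := rfl

lemma yoMap_comp (hs : Subcanonical J) {U V W : C} (f : U ⟶ V) (g : V ⟶ W) :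
    yoMap J hs (f ≫ g) = yoMap J hs f ≫ yoMap J hs g :=
  InducedCategory.hom_ext (yoneda.map_comp f g)

lemma mono_yoMap_of_mono (hs : Subcanonical J) {U V : C} (φ : U ⟶ V) (h : Mono φ) :
    Mono (yoMap J hs φ) := by
  have : ∀ W : Cᵒᵖ, Mono ((yoneda.map φ).app W) := by
    intro W
    rw [CategoryTheory.mono_iff_injective]
    intro a b hab
    have : a ≫ φ = b ≫ φ := hab
    exact (cancel_mono φ).1 this
  have : Mono (yoneda.map φ) := NatTrans.mono_of_mono_app _
  exact (sheafToPresheaf J _).mono_of_mono_map this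

lemma mono_of_mono_yoMap (hs : Subcanonical J) {U V : C} (φ : U ⟶ V)
    (h : Mono (yoMap J hs φ)) : Mono φ := by
  have : Mono ((sheafToPresheaf J _).map (yoMap J hs φ)) := inferInstance
  exact yoneda.mono_of_mono_map (this : Mono (yoneda.map φ))

/-- An element of a sheaf, as a morphism from a representable sheaf. -/
def el (hs : Subcanonical J) {F : Sheaf J (Type u)} {W : C} (s : F.val.obj (op W)) :
    yo J hs W ⟶ F :=
  ⟨yonedaEquiv.symm s⟩

lemma el_comp (hs : Subcanonical J) {F G : Sheaf J (Type u)} (f : F ⟶ G) {W : C}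
    (s : F.val.obj (op W)) :
    el hs s ≫ f = el hs (f.hom.app (op W) s) := by
  refine InducedCategory.hom_ext ?_
  apply yonedaEquiv.injective
  show yonedaEquiv (yonedaEquiv.symm s ≫ f.hom) = _
  rw [CategoryTheory.yonedaEquiv_comp, Equiv.apply_symm_apply]
  exact (Equiv.apply_symm_apply _ _).symm

/-- Elements of a sheaf pullback are determined by their two projections. -/
lemma pb_el_ext (hs : Subcanonical J) {F G H : Sheaf J (Type u)} (f : F ⟶ H) (g : G ⟶ H)
    {W : C} (s s' : (pullback f g).val.obj (op W))
    (h1 : (pullback.fst f g).hom.app (op W) s = (pullback.fst f g).hom.app (op W) s')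
    (h2 : (pullback.snd f g).hom.app (op W) s = (pullback.snd f g).hom.app (op W) s') :
    s = s' := by
  have : el hs s = el hs s' := by
    apply pullback.hom_ext
    · rw [el_comp, el_comp, h1]
    · rw [el_comp, el_comp, h2]
  have := congrArg InducedCategory.Hom.hom this
  exact yonedaEquiv.symm.injective this

/-- If the induced map from a coproduct of representables is an epimorphism of sheaves,
the family generates a covering sieve. -/
lemma cover_of_epi (hs : Subcanonical J) {V : C} {I : Type u} {Ui : I → C}
    (σ : ∀ i, Ui i ⟶ V)
    (h : Epi (Limits.Sigma.desc fun i => yoMap J hs (σ i))) :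
    Sieve.generate (Presieve.ofArrows Ui σ) ∈ J V := by
  set S := Sieve.generate (Presieve.ofArrows Ui σ) with hS
  let G : Subfunctor (yoneda.obj V) :=
    { obj := fun W => {f | S.arrows f}
      map := by
        intro W W' i f hf
        exact S.downward_closed hf i.unop }
  have hy : Presieve.IsSheaf J (yoneda.obj V) := (isSheaf_iff_isSheaf_of_type J _).1 (hs V)
  let Gs := G.sheafify J
  have hGs : Presieve.IsSheaf J Gs.toFunctor := G.sheafify_isSheaf hy
  let FF : Sheaf J (Type u) := ⟨Gs.toFunctor, (isSheaf_iff_isSheaf_of_type J _).2 hGs⟩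
  let ι : FF ⟶ yo J hs V := ⟨Gs.ι⟩
  have hmono : Mono ι := by
    apply (sheafToPresheaf J _).mono_of_mono_map
    show Mono Gs.ι
    infer_instance
  have hfac : ∀ i (W : Cᵒᵖ) (x : (yoneda.obj (Ui i)).obj W),
      (yoneda.map (σ i)).app W x ∈ Gs.obj W := by
    intro i W x
    apply G.le_sheafify J
    exact ⟨Ui i, x, σ i, Presieve.ofArrows.mk i, rfl⟩
  let d : (∐ fun i => yo J hs (Ui i)) ⟶ FF :=
    Limits.Sigma.desc fun i => (⟨Gs.lift (yoneda.map (σ i)) (by rintro W _ ⟨x, rfl⟩; exact hfac i W x)⟩ : yo J hs (Ui i) ⟶ FF)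
  have hdι : d ≫ ι = Limits.Sigma.desc fun i => yoMap J hs (σ i) := by
    apply Limits.Sigma.hom_ext
    intro i
    simp only [d, colimit.ι_desc_assoc, colimit.ι_desc, Discrete.functor_obj, Cofan.mk_ι_app]
    exact InducedCategory.hom_ext rfl
  have hepi : Epi ι := epi_of_epi_fac hdι
  have : IsIso ι := isIso_of_mono_of_epi ι
  have hιval : IsIso ι.hom := by
    change IsIso ((sheafToPresheaf J _).map ι)
    infer_instance
  have htop : Gs = ⊤ := (Subfunctor.eq_top_iff_isIso Gs).2 hιval
  have h1 : (𝟙 V) ∈ Gs.obj (op V) := by rw [htop]; trivial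
  have : G.sieveOfSection (𝟙 V) ∈ J V := h1
  convert this using 2
  ext W f
  show S.arrows f ↔ f ≫ 𝟙 V ∈ G.obj (op W)
  simp [G]

end GeomCtx

open Opposite CategoryTheory.GrothendieckTopology

open GeomCtx in
/-- A morphism `φ : U' ⟶ U` of `C` is a `P`-monomorphism iff the induced morphism of
representable sheaves `h_φ : h_{U'} ⟶ h_U` is an open immersion of sheaves. -/
theorem statement6 {C : Type u} [SmallCategory C] (J : GrothendieckTopology C)
    (P : MorphismProperty C) (hGC : IsGeometricContext J P)
    {U' U : C} (φ : U' ⟶ U) :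
    (Mono φ ∧ P φ) ↔
      IsOpenImmersion J P hGC.subcanonical (yoMap J hGC.subcanonical φ) := by
  constructor
  · rintro ⟨hm, hP⟩
    haveI hmy : Mono (yoMap J hGC.subcanonical φ) := mono_yoMap_of_mono _ φ hm
    intro U₀ g
    obtain ⟨ψ, rfl⟩ : ∃ ψ : U₀ ⟶ U, g = yoMap J hGC.subcanonical ψ :=
      ⟨yoneda.preimage g.hom, InducedCategory.hom_ext (by rw [yoMap_val]; exact (Functor.map_preimage yoneda _).symm)⟩
    refine ⟨inferInstance, ?_⟩
    obtain ⟨I, Uk, ρ, hcov, hρP, hcart⟩ := hGC.locallyCartesian φ hP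
    haveI : ∀ k, HasPullback (ρ k ≫ φ) ψ := fun k => hcart k ψ
    let τ : ∀ k, pullback (ρ k ≫ φ) ψ ⟶ U₀ := fun k => pullback.snd (ρ k ≫ φ) ψ
    have hτP : ∀ k, P (τ k) := fun k =>
      hGC.stableUnderBaseChange _ _ _ _ (IsPullback.of_hasPullback (ρ k ≫ φ) ψ).flip
        (hGC.stableUnderComposition _ _ (hρP k) hP)
    let tk : ∀ k, yo J hGC.subcanonical (pullback (ρ k ≫ φ) ψ) ⟶
        pullback (yoMap J hGC.subcanonical φ) (yoMap J hGC.subcanonical ψ) := fun k =>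
      pullback.lift (yoMap J hGC.subcanonical (pullback.fst (ρ k ≫ φ) ψ ≫ ρ k))
        (yoMap J hGC.subcanonical (τ k))
        (by rw [← yoMap_comp, ← yoMap_comp, Category.assoc, pullback.condition])
    let t : (∐ fun k => yo J hGC.subcanonical (pullback (ρ k ≫ φ) ψ)) ⟶
        pullback (yoMap J hGC.subcanonical φ) (yoMap J hGC.subcanonical ψ) :=
      Limits.Sigma.desc tk
    have hts : t ≫ pullback.snd _ _ = Limits.Sigma.desc fun k => yoMap J hGC.subcanonical (τ k) := by
      apply Limits.Sigma.hom_ext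
      intro k
      simp [t, tk]
      exact pullback.lift_snd _ _ _
    haveI hls : Presheaf.IsLocallySurjective J t.hom := by
      constructor
      intro W s
      set a := (pullback.fst (yoMap J hGC.subcanonical φ)
        (yoMap J hGC.subcanonical ψ)).hom.app (op W) s with ha
      set b := (pullback.snd (yoMap J hGC.subcanonical φ)
        (yoMap J hGC.subcanonical ψ)).hom.app (op W) s with hb
      have hab : a ≫ φ = b ≫ ψ := by
        have := congrArg (fun (m : _ ⟶ yo J hGC.subcanonical U) => m.hom.app (op W) s)
          (pullback.condition (f := yoMap J hGC.subcanonical φ)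
            (g := yoMap J hGC.subcanonical ψ))
        exact this
      refine J.superset_covering ?_ (J.pullback_stable a hcov)
      rintro W' f hf
      obtain ⟨Z, h0, g0, hg0, hfac⟩ := hf
      cases hg0 with
      | mk k =>
      have hcomm : h0 ≫ (ρ k ≫ φ) = (f ≫ b) ≫ ψ := by
        rw [← Category.assoc, hfac]
        exact (Category.assoc f a φ).trans ((congrArg (f ≫ ·) hab).trans (Category.assoc f b ψ).symm)
      let v : W' ⟶ pullback (ρ k ≫ φ) ψ := pullback.lift h0 (f ≫ b) hcomm
      refine ⟨(Limits.Sigma.ι (fun k => yo J hGC.subcanonical (pullback (ρ k ≫ φ) ψ)) k).hom.app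
        (op W') v, ?_⟩
      apply pb_el_ext hGC.subcanonical
      · have comp1 : Limits.Sigma.ι (fun k => yo J hGC.subcanonical (pullback (ρ k ≫ φ) ψ)) k ≫
            t ≫ pullback.fst _ _ =
            yoMap J hGC.subcanonical (pullback.fst (ρ k ≫ φ) ψ ≫ ρ k) := by
          simp [t, tk]
          exact pullback.lift_fst _ _ _
        have lhs := congrArg (fun (m : _ ⟶ yo J hGC.subcanonical U') => m.hom.app (op W') v) comp1
        have nat := ConcreteCategory.congr_hom ((pullback.fst (yoMap J hGC.subcanonical φ)
          (yoMap J hGC.subcanonical ψ)).hom.naturality f.op) s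
        refine Eq.trans (lhs : _ = _) ?_
        refine Eq.trans ?_ (nat : _ = _).symm
        show v ≫ pullback.fst (ρ k ≫ φ) ψ ≫ ρ k = f ≫ a
        rw [← Category.assoc, pullback.lift_fst, hfac]
      · have comp2 : Limits.Sigma.ι (fun k => yo J hGC.subcanonical (pullback (ρ k ≫ φ) ψ)) k ≫
            t ≫ pullback.snd _ _ = yoMap J hGC.subcanonical (τ k) := by
          simp [t, tk]
          exact pullback.lift_snd _ _ _
        have lhs := congrArg (fun (m : _ ⟶ yo J hGC.subcanonical U₀) => m.hom.app (op W') v) comp2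
        have nat := ConcreteCategory.congr_hom ((pullback.snd (yoMap J hGC.subcanonical φ)
          (yoMap J hGC.subcanonical ψ)).hom.naturality f.op) s
        refine Eq.trans (lhs : _ = _) ?_
        refine Eq.trans ?_ (nat : _ = _).symm
        show v ≫ pullback.snd (ρ k ≫ φ) ψ = f ≫ b
        exact pullback.lift_snd _ _ _
    haveI hepi : Epi t :=
      (Sheaf.isLocallySurjective_iff_epi t).1 hls
    refine ⟨I, _, τ, hτP, ?_⟩
    exact ⟨Sheaf.image (pullback.snd _ _), Sheaf.imageι _, t ≫ Sheaf.toImage _, Sheaf.toImage _,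
      inferInstance, epi_comp _ _, inferInstance,
      by rw [Category.assoc, Sheaf.toImage_ι, hts], Sheaf.toImage_ι _⟩
  · intro hOI
    obtain ⟨hmono, I, Ui, ρ, hρP, W0, i, p, q, hWmono, hpepi, hqepi, hpi, hqi⟩ :=
      hOI U (𝟙 _)
    -- `Mono φ`
    haveI : Mono (pullback.snd (yoMap J hGC.subcanonical φ) (𝟙 (yo J hGC.subcanonical U))) :=
      hmono
    have hl : pullback.lift (𝟙 _) (yoMap J hGC.subcanonical φ) (by simp) ≫
        pullback.snd (yoMap J hGC.subcanonical φ) (𝟙 _) = yoMap J hGC.subcanonical φ :=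
      pullback.lift_snd _ _ _
    haveI : IsSplitMono (pullback.lift (𝟙 _) (yoMap J hGC.subcanonical φ)
        (by simp : 𝟙 _ ≫ yoMap J hGC.subcanonical φ = yoMap J hGC.subcanonical φ ≫ 𝟙 _)) :=
      IsSplitMono.mk' ⟨pullback.fst _ _, pullback.lift_fst _ _ _⟩
    have hmφ : Mono φ := by
      apply mono_of_mono_yoMap hGC.subcanonical
      rw [← hl]
      exact mono_comp _ _
    refine ⟨hmφ, ?_⟩
    -- `q` is an isomorphism
    haveI : Mono q := by
      rw [← hqi] at hmono
      exact mono_of_mono q i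
    haveI : IsIso q := isIso_of_mono_of_epi q
    -- the pullback along the identity is isomorphic to `yo U'`
    have hfl : pullback.lift (𝟙 _) (yoMap J hGC.subcanonical φ)
        (by simp : 𝟙 _ ≫ yoMap J hGC.subcanonical φ = yoMap J hGC.subcanonical φ ≫ 𝟙 _) ≫
        pullback.fst _ _ = 𝟙 _ := pullback.lift_fst _ _ _
    have hlf : pullback.fst (yoMap J hGC.subcanonical φ) (𝟙 _) ≫
        pullback.lift (𝟙 _) (yoMap J hGC.subcanonical φ) (by simp) = 𝟙 _ := by
      apply pullback.hom_ext
      · simp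
        rw [pullback.lift_fst, Category.comp_id]
      · simp [pullback.condition]
        rw [pullback.lift_snd, pullback.condition, Category.comp_id]
    -- the epimorphism onto `yo U'`
    let e : (∐ fun i0 => yo J hGC.subcanonical (Ui i0)) ⟶ yo J hGC.subcanonical U' :=
      p ≫ inv q ≫ pullback.fst _ _
    haveI hee : Epi e := by
      unfold e
      infer_instance
    have heφ : e ≫ yoMap J hGC.subcanonical φ = Limits.Sigma.desc fun i0 => yoMap J hGC.subcanonical (ρ i0) := by
      have h1 : pullback.fst (yoMap J hGC.subcanonical φ) (𝟙 _) ≫ yoMap J hGC.subcanonical φ =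
          pullback.snd _ _ := by
        rw [pullback.condition, Category.comp_id]
      rw [← hqi] at h1
      unfold e
      rw [Category.assoc, Category.assoc, h1, IsIso.inv_hom_id_assoc, hpi]
    -- the factored family
    let σ : ∀ i0, Ui i0 ⟶ U' := fun i0 =>
      yoneda.preimage (Limits.Sigma.ι (fun i1 => yo J hGC.subcanonical (Ui i1)) i0 ≫ e).hom
    have hσ : ∀ i0, yoMap J hGC.subcanonical (σ i0) =
        Limits.Sigma.ι (fun i1 => yo J hGC.subcanonical (Ui i1)) i0 ≫ e := fun i0 =>
      InducedCategory.hom_ext (by rw [yoMap_val]; exact yoneda.map_preimage _)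
    have hσφ : ∀ i0, σ i0 ≫ φ = ρ i0 := by
      intro i0
      apply yoneda.map_injective
      have := congrArg (fun (m : _ ⟶ yo J hGC.subcanonical U) => m.hom)
        (congrArg (fun m => m ≫ yoMap J hGC.subcanonical φ) (hσ i0))
      have h2 : (Limits.Sigma.ι (fun i1 => yo J hGC.subcanonical (Ui i1)) i0 ≫ e) ≫
          yoMap J hGC.subcanonical φ = yoMap J hGC.subcanonical (ρ i0) := by
        rw [Category.assoc, heφ]
        simp
      have key : yoMap J hGC.subcanonical (σ i0 ≫ φ) = yoMap J hGC.subcanonical (ρ i0) := by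
        rw [yoMap_comp, hσ i0, h2]
      have key' := congrArg InducedCategory.Hom.hom key
      exact key'
    -- the family is jointly epimorphic, hence covering
    have hdesc : Limits.Sigma.desc (fun i0 => yoMap J hGC.subcanonical (σ i0)) = e := by
      apply Limits.Sigma.hom_ext
      intro i0
      rw [colimit.ι_desc]
      exact (hσ i0).trans rfl
    have hcover : IsJCover J Ui σ := by
      apply cover_of_epi hGC.subcanonical
      rw [hdesc]
      exact hee
    -- each `σ i0` lies in `P` by stability under base change
    have hσP : ∀ i0, P (σ i0) := by
      intro i0
      refine hGC.stableUnderBaseChange (σ i0) (𝟙 _) φ (ρ i0) ?_ (hρP i0)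
      refine ⟨⟨by rw [Category.id_comp, hσφ i0]⟩, ⟨PullbackCone.IsLimit.mk _
        (fun s => s.snd) (fun s => ?_) (fun s => Category.comp_id _) (fun s m _ hm => ?_)⟩⟩
      · apply (cancel_mono φ).1
        rw [Category.assoc, hσφ i0, s.condition]
      · simpa using hm
    exact hGC.jLocal φ Ui σ hcover hσP (fun i0 => by rw [hσφ i0]; exact hρP i0)
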